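/- arXiv:2211.02588 — 6 statements merged into one kernel-verified Lean document; each statement's English description precedes it below -/
import Mathlib

section
/- Let $k \geq 4$ be an even integer and $m$ a positive integer with $m \equiv -1 \pmod{k}$ whose least prime factor is at least $k$. Let $D = \{0, 1, \ldots, \lfloor \frac{k-2}{k} m \rfloor\} \cup \{\frac{(k-1)m - 1}{k}\} \subseteq \mathbb{Z}/m\mathbb{Z}$, and let $n$ be divisible by $|D| = \lfloor \frac{k-2}{k} m \rfloor + 2$. Then $S(D,n)$ contains no non-constant arithmetic progression of length $k$. -/
lemma aux_smul_ne_zero {m k : ℕ} [NeZero m] (hpf : k ≤ m.minFac) {d : ℕ}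
    (hd1 : 1 ≤ d) (hdk : d < k) {cv : ZMod m} (hcv : cv ≠ 0) : (d • cv : ZMod m) ≠ 0 := by
  intro h
  have hcop : Nat.Coprime d m := by
    by_contra hnc
    obtain ⟨p, hp, hpd, hpm⟩ := Nat.Prime.not_coprime_iff_dvd.mp hnc
    have h1 : p ≤ d := Nat.le_of_dvd (by omega) hpd
    have h2 : m.minFac ≤ p := Nat.minFac_le_of_dvd hp.two_le hpm
    omega
  have hu : IsUnit (d : ZMod m) := (ZMod.isUnit_iff_coprime d m).2 hcop
  rw [nsmul_eq_mul] at h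
  exact hcv ((IsUnit.mul_right_eq_zero hu).mp h)

lemma pigeon {m k : ℕ} [NeZero m] (hpf : k ≤ m.minFac)
    {cv : ZMod m} (hcv : cv ≠ 0) (P B : ℕ) (hP2 : 2 ≤ P) (hPk : P ≤ k)
    (hB1 : 1 ≤ B) (hBm : B ≤ m) (hPB : m < P * B) :
    ∃ d : ℕ, 1 ≤ d ∧ d ≤ P - 1 ∧
      ((d • cv : ZMod m).val < B ∨ m - B < (d • cv : ZMod m).val) := by
  by_contra hcon
  push_neg at hcon
  have hX : (P-2)*B + 2*B = P*B := by
    have h2 : P - 2 + 2 = P := by omega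
    calc (P-2)*B + 2*B = (P-2+2)*B := by ring
      _ = P*B := by rw [h2]
  have hmaps : ∀ d ∈ Finset.Icc 1 (P-1),
      ((d • cv : ZMod m).val - B)/B ∈ Finset.range (P-2) := by
    intro d hd
    simp only [Finset.mem_Icc] at hd
    obtain ⟨hlo, hhi⟩ := hcon d hd.1 hd.2
    rw [Finset.mem_range, Nat.div_lt_iff_lt_mul (by omega : 0 < B)]
    omega
  obtain ⟨j, hj, j', hj', hne, heq⟩ := Finset.exists_ne_map_eq_of_card_lt_of_maps_to
      (by rw [Nat.card_Icc, Finset.card_range]; omega) hmaps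
  simp only [Finset.mem_Icc] at hj hj'
  obtain ⟨hbj1, hbj2⟩ := hcon j hj.1 hj.2
  obtain ⟨hbj1', hbj2'⟩ := hcon j' hj'.1 hj'.2
  have hdiff : (j • cv : ZMod m).val < (j' • cv : ZMod m).val + B ∧
      (j' • cv : ZMod m).val < (j • cv : ZMod m).val + B := by
    have h1 := Nat.div_add_mod ((j • cv : ZMod m).val - B) B
    have h2 := Nat.div_add_mod ((j' • cv : ZMod m).val - B) B
    have h3 : ((j • cv : ZMod m).val - B) % B < B := Nat.mod_lt _ (by omega)
    have h4 : ((j' • cv : ZMod m).val - B) % B < B := Nat.mod_lt _ (by omega)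
    rw [heq] at h1
    omega
  have key : ∀ jb js : ℕ, js < jb → 1 ≤ js → jb ≤ P - 1 →
      (jb • cv : ZMod m).val < (js • cv : ZMod m).val + B →
      (js • cv : ZMod m).val < (jb • cv : ZMod m).val + B → False := by
    intro jb js hlt h1s hbP hd1 hd2
    have hsub : ((jb - js) • cv : ZMod m)
        = ((jb • cv : ZMod m).val : ZMod m) - ((js • cv : ZMod m).val : ZMod m) := by
      rw [sub_nsmul cv hlt.le, ← sub_eq_add_neg]
      congr 1
      · exact (ZMod.natCast_rightInverse _).symm
      · exact (ZMod.natCast_rightInverse _).symm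
    have hdin : 1 ≤ jb - js ∧ jb - js ≤ P - 1 := by omega
    obtain ⟨hlow, hhig⟩ := hcon (jb - js) hdin.1 hdin.2
    have hgne : (jb • cv : ZMod m).val ≠ (js • cv : ZMod m).val := by
      intro hgeq
      have hz : ((jb - js) • cv : ZMod m) = 0 := by rw [hsub, hgeq, sub_self]
      exact aux_smul_ne_zero hpf hdin.1 (by omega) hcv hz
    rcases Nat.lt_or_ge ((js • cv : ZMod m).val) ((jb • cv : ZMod m).val) with hglt | hgge
    · have hv : ((jb - js) • cv : ZMod m).val
          = (jb • cv : ZMod m).val - (js • cv : ZMod m).val := by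
        rw [hsub, ← Nat.cast_sub hglt.le]
        exact ZMod.val_cast_of_lt (by omega)
      omega
    · have hglt2 : (jb • cv : ZMod m).val < (js • cv : ZMod m).val := by omega
      have hle : (js • cv : ZMod m).val - (jb • cv : ZMod m).val ≤ m := by
        have := ZMod.val_lt (js • cv : ZMod m)
        omega
      have hcast : ((m - ((js • cv : ZMod m).val - (jb • cv : ZMod m).val) : ℕ) : ZMod m)
          = ((jb • cv : ZMod m).val : ZMod m) - ((js • cv : ZMod m).val : ZMod m) := by
        rw [Nat.cast_sub hle, Nat.cast_sub hglt2.le, ZMod.natCast_self]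
        ring
      have hv : ((jb - js) • cv : ZMod m).val
          = m - ((js • cv : ZMod m).val - (jb • cv : ZMod m).val) := by
        rw [hsub, ← hcast]
        exact ZMod.val_cast_of_lt (by omega)
      omega
  rcases (Ne.lt_or_gt hne) with h | h
  · exact key j' j h hj.1 hj'.2 hdiff.2 hdiff.1
  · exact key j j' h hj'.1 hj.2 hdiff.1 hdiff.2

-- Lemma B : a nonconstant progression cannot start at s = m - Q
lemma lemB {m k Q : ℕ} [NeZero m] (hk : 4 ≤ k) (hpf : k ≤ m.minFac)
    (hQ : m + 1 = k * Q) (hQ2 : 2 ≤ Q)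
    (av cv : ZMod m) (hcv : cv ≠ 0)
    (hL : ∀ i : ℕ, i ≤ k - 1 →
      ((av + i • cv).val ≤ m - 2*Q ∨ (av + i • cv).val = m - Q))
    (h0 : av.val = m - Q) : False := by
  have h4Q : 4 * Q ≤ k * Q := Nat.mul_le_mul_right Q (by omega)
  obtain ⟨d, hd1, hdk, hcase⟩ := pigeon hpf hcv k Q (by omega) le_rfl
    (by omega) (by omega) (by omega)
  have hxd := hL d (by omega)
  have hne : (av + d • cv) ≠ av := by
    intro h
    have hz : (d • cv : ZMod m) = 0 := by
      have := add_eq_left.mp h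
      exact this
    exact aux_smul_ne_zero hpf hd1 (by omega) hcv hz
  have hxdval : (av + d • cv).val ≤ m - 2*Q := by
    rcases hxd with h | h
    · exact h
    · exfalso
      apply hne
      calc av + d • cv = (((av + d • cv).val : ℕ) : ZMod m) :=
            (ZMod.natCast_rightInverse _).symm
        _ = ((av.val : ℕ) : ZMod m) := by rw [h, h0]
        _ = av := ZMod.natCast_rightInverse _
  set y := (av + d • cv).val with hy
  have hdcv : (d • cv : ZMod m) = ((y + Q : ℕ) : ZMod m) := by
    have h1 : ((y : ℕ) : ZMod m) = av + d • cv := ZMod.natCast_rightInverse _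
    have h2 : ((m - Q : ℕ) : ZMod m) = av := by
      rw [← h0]; exact ZMod.natCast_rightInverse _
    have h3 : ((y + Q : ℕ) : ZMod m) = ((y : ℕ) : ZMod m) - ((m - Q : ℕ) : ZMod m) := by
      rw [Nat.cast_sub (by omega : Q ≤ m), Nat.cast_add, ZMod.natCast_self]
      ring
    rw [h3, h1, h2]
    ring
  have hval : (d • cv : ZMod m).val = y + Q := by
    rw [hdcv]
    exact ZMod.val_cast_of_lt (by omega)
  rcases hcase with h | h
  · omega
  · omega

-- Lemma C : a nonconstant progression inside [0, m-2Q] cannot attain its maximum at row k/2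
lemma lemC {m k Q : ℕ} [NeZero m] (hk : 4 ≤ k) (hk2 : 2 ∣ k) (hpf : k ≤ m.minFac)
    (hQ : m + 1 = k * Q) (hQ2 : 2 ≤ Q)
    (av cv : ZMod m) (hcv : cv ≠ 0)
    (hL : ∀ i : ℕ, i ≤ k - 1 → (av + i • cv).val ≤ m - 2*Q) :
    ¬ (∀ i : ℕ, i ≤ k - 1 → (av + i • cv).val ≤ (av + (k/2) • cv).val) := by
  intro hmax
  have h4Q : 4 * Q ≤ k * Q := Nat.mul_le_mul_right Q (by omega)
  have h2k : 2 * (k / 2) = k := Nat.two_mul_div_two_of_even (even_iff_two_dvd.mpr hk2)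
  have hPB : m < (k/2) * (2*Q) := by
    have : (k/2) * (2*Q) = k * Q := by
      calc (k/2) * (2*Q) = (2*(k/2))*Q := by ring
        _ = k * Q := by rw [h2k]
    omega
  obtain ⟨d, hd1, hdk, hcase⟩ := pigeon hpf hcv (k/2) (2*Q) (by omega) (by omega)
    (by omega) (by omega) hPB
  have hp1 : 1 ≤ k/2 := by omega
  have hpk : k/2 ≤ k - 1 := by omega
  have hvp : (av + (k/2) • cv).val ≤ m - 2*Q := hL (k/2) hpk
  have hene : (d • cv : ZMod m) ≠ 0 := aux_smul_ne_zero hpf hd1 (by omega) hcv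
  have he1 : 1 ≤ (d • cv : ZMod m).val := by
    rcases Nat.eq_zero_or_pos ((d • cv : ZMod m).val) with h | h
    · exact absurd ((ZMod.val_eq_zero _).mp h) hene
    · exact h
  have helt : (d • cv : ZMod m).val < m := ZMod.val_lt _
  rcases hcase with hlow | hhigh
  · -- small positive step : go to row k/2 + d
    have hpd : k/2 + d ≤ k - 1 := by omega
    have hcalc : (av + (k/2 + d) • cv)
        = (((av + (k/2) • cv).val + (d • cv : ZMod m).val : ℕ) : ZMod m) := by
      rw [add_nsmul, ← add_assoc, Nat.cast_add]
      congr 1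
      · exact (ZMod.natCast_rightInverse _).symm
      · exact (ZMod.natCast_rightInverse _).symm
    have hval : (av + (k/2 + d) • cv).val
        = (av + (k/2) • cv).val + (d • cv : ZMod m).val := by
      rw [hcalc]
      exact ZMod.val_cast_of_lt (by omega)
    have := hmax (k/2 + d) hpd
    omega
  · -- big step : go to row k/2 - d
    have hpd : k/2 - d ≤ k - 1 := by omega
    have hsum : (k/2 - d) + d = k/2 := by omega
    have hcalc0 : (av + (k/2 - d) • cv) + d • cv = av + (k/2) • cv := by
      rw [add_assoc, ← add_nsmul, hsum]
    have hcalc : (av + (k/2 - d) • cv)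
        = (((av + (k/2) • cv).val + (m - (d • cv : ZMod m).val) : ℕ) : ZMod m) := by
      have h1 : (av + (k/2 - d) • cv)
          = (((av + (k/2) • cv).val : ℕ) : ZMod m) - (((d • cv : ZMod m).val : ℕ) : ZMod m) := by
        rw [eq_sub_iff_add_eq]
        have e1 : (((d • cv : ZMod m).val : ℕ) : ZMod m) = d • cv :=
          ZMod.natCast_rightInverse _
        have e2 : (((av + (k/2) • cv).val : ℕ) : ZMod m) = av + (k/2) • cv :=
          ZMod.natCast_rightInverse _
        rw [e1, e2]
        exact hcalc0
      rw [h1, Nat.cast_add, Nat.cast_sub helt.le, ZMod.natCast_self]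
      ring
    have hval : (av + (k/2 - d) • cv).val
        = (av + (k/2) • cv).val + (m - (d • cv : ZMod m).val) := by
      rw [hcalc]
      exact ZMod.val_cast_of_lt (by omega)
    have := hmax (k/2 - d) hpd
    omega

-- Counting endgame
lemma lemE {m k n : ℕ} (D : Finset (ZMod m)) (hdvd : D.card ∣ n)
    (a c : Fin n → ZMod m)
    (hmem : ∀ i : Fin k, ∀ d ∈ D,
      (Finset.univ.filter (fun j : Fin n => a j + (i : ℕ) • c j = d)).card = n / D.card)
    (u : ZMod m) (hu : u ∈ D) (i₀ : Fin k)
    (hnone : ∀ j, c j ≠ 0 → a j + (i₀ : ℕ) • c j ≠ u)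
    (i₁ : Fin k) (j₁ : Fin n) (hj₁ : c j₁ ≠ 0)
    (hj₁u : a j₁ + (i₁ : ℕ) • c j₁ = u) : False := by
  classical
  set K := Finset.univ.filter (fun j : Fin n => c j = 0 ∧ a j = u) with hK
  have h0 : Finset.univ.filter (fun j : Fin n => a j + (i₀ : ℕ) • c j = u) = K := by
    ext j
    simp only [hK, Finset.mem_filter, Finset.mem_univ, true_and]
    constructor
    · intro h
      by_cases hcj : c j = 0
      · refine ⟨hcj, ?_⟩
        rwa [hcj, smul_zero, add_zero] at h
      · exact absurd h (hnone j hcj)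
    · rintro ⟨h1, h2⟩
      rw [h1, smul_zero, add_zero]
      exact h2
  have h1 : insert j₁ K ⊆ Finset.univ.filter (fun j : Fin n => a j + (i₁ : ℕ) • c j = u) := by
    intro j hj
    rcases Finset.mem_insert.mp hj with rfl | hj
    · simp only [Finset.mem_filter, Finset.mem_univ, true_and]
      exact hj₁u
    · simp only [hK, Finset.mem_filter, Finset.mem_univ, true_and] at hj
      simp only [Finset.mem_filter, Finset.mem_univ, true_and]
      rw [hj.1, smul_zero, add_zero]
      exact hj.2
  have hj₁K : j₁ ∉ K := by
    simp only [hK, Finset.mem_filter, Finset.mem_univ, true_and]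
    intro h
    exact hj₁ h.1
  have hc1 := hmem i₀ u hu
  have hc2 := hmem i₁ u hu
  have hle : (insert j₁ K).card ≤ n / D.card := by
    rw [← hc2]
    exact Finset.card_le_card h1
  rw [Finset.card_insert_of_notMem hj₁K] at hle
  rw [h0] at hc1
  omega

-- every coordinate of every row lies in D
lemma lemAll {m k n : ℕ} (D : Finset (ZMod m)) (hdvd : D.card ∣ n)
    (a c : Fin n → ZMod m)
    (hmem : ∀ i : Fin k, ∀ d ∈ D,
      (Finset.univ.filter (fun j : Fin n => a j + (i : ℕ) • c j = d)).card = n / D.card) :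
    ∀ (i : Fin k) (j : Fin n), a j + (i : ℕ) • c j ∈ D := by
  classical
  intro i j
  have hpart : Finset.univ.filter (fun j : Fin n => a j + (i : ℕ) • c j ∈ D)
      = D.biUnion (fun d => Finset.univ.filter (fun j : Fin n => a j + (i : ℕ) • c j = d)) := by
    ext x
    simp only [Finset.mem_filter, Finset.mem_univ, true_and, Finset.mem_biUnion]
    constructor
    · intro h
      exact ⟨_, h, rfl⟩
    · rintro ⟨d, hd, h⟩
      rw [h]
      exact hd
  have hcard : (Finset.univ.filter (fun j : Fin n => a j + (i : ℕ) • c j ∈ D)).card = n := by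
    rw [hpart, Finset.card_biUnion]
    · rw [Finset.sum_congr rfl (fun d hd => hmem i d hd), Finset.sum_const, smul_eq_mul,
        Nat.mul_div_cancel' hdvd]
    · intro d hd d' hd' hne
      rw [Function.onFun, Finset.disjoint_left]
      intro x hx hx'
      simp only [Finset.mem_filter, Finset.mem_univ, true_and] at hx hx'
      exact hne (hx ▸ hx')
  have huniv : Finset.univ.filter (fun j : Fin n => a j + (i : ℕ) • c j ∈ D) = Finset.univ := by
    apply Finset.eq_univ_of_card
    rw [hcard, Fintype.card_fin]
  have := huniv ▸ Finset.mem_univ j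
  simpa using this

/-- Theorem (even k): `S(D,n)` with `D = {0,…,⌊(k-2)m/k⌋} ∪ {((k-1)m-1)/k}` has no
non-constant `k`-term arithmetic progression. -/
theorem stmt1 (m k : ℕ) (hm : 0 < m) (hk : 4 ≤ k) (hkeven : Even k)
    (hmk : m % k = k - 1) (hpf : k ≤ m.minFac)
    (D : Finset (ZMod m))
    (hD : D = (Finset.range ((k - 2) * m / k + 1)).image (fun i : ℕ => (i : ZMod m))
      ∪ {((((k - 1) * m - 1) / k : ℕ) : ZMod m)})
    (hDcard : D.card = (k - 2) * m / k + 2)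
    (n : ℕ) (hn : 0 < n) (hdvd : D.card ∣ n)
    (a c : Fin n → ZMod m) (hc : c ≠ 0)
    (hmem : ∀ i : Fin k, ∀ d ∈ D,
      (Finset.univ.filter (fun j : Fin n => a j + (i : ℕ) • c j = d)).card = n / D.card) :
    False := by
  classical
  haveI : NeZero m := ⟨hm.ne'⟩
  have hk2 : 2 ∣ k := hkeven.two_dvd
  obtain ⟨Q, hQ⟩ : ∃ Q, m + 1 = k * Q := by
    refine ⟨m / k + 1, ?_⟩
    have h1 := Nat.div_add_mod m k
    rw [hmk] at h1
    have h2 : k * (m / k + 1) = k * (m / k) + k := by ring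
    omega
  have h4Q : 4 * Q ≤ k * Q := Nat.mul_le_mul_right Q (by omega)
  have hQ1 : 1 ≤ Q := by
    rcases Nat.eq_zero_or_pos Q with h | h
    · rw [h, Nat.mul_zero] at hQ; omega
    · exact h
  have hQ2 : 2 ≤ Q := by
    by_contra hcon
    have hQ1' : Q = 1 := by omega
    have hkQ : k * Q = k := by rw [hQ1', Nat.mul_one]
    have h2m : 2 ≤ m := by omega
    have := Nat.minFac_le (show 0 < m by omega)
    omega
  have h2Q : 2 * Q ≤ m := by omega
  -- t identity
  have e1 : (k - 2) * m + 2 * m = k * m := by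
    have h2 : k - 2 + 2 = k := by omega
    calc (k-2)*m + 2*m = ((k-2)+2)*m := by ring
      _ = k*m := by rw [h2]
  have e2 : k * (m - 2*Q) + k * (2*Q) = k * m := by
    rw [← Nat.mul_add, Nat.sub_add_cancel h2Q]
  have e3 : k * (2*Q) = 2 * (m + 1) := by
    calc k * (2*Q) = 2 * (k * Q) := by ring
      _ = 2 * (m + 1) := by rw [hQ]
  have e4 : (k - 2) * m = k * (m - 2*Q) + 2 := by omega
  have ht : (k - 2) * m / k = m - 2*Q := by
    rw [e4, Nat.mul_add_div (by omega : 0 < k)]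
    rw [Nat.div_eq_of_lt (show 2 < k by omega)]
    omega
  -- s identity
  have e5 : (k - 1) * m + m = k * m := by
    have h2 : k - 1 + 1 = k := by omega
    calc (k-1)*m + m = ((k-1)+1)*m := by ring
      _ = k*m := by rw [h2]
  have e6 : k * (m - Q) + k * Q = k * m := by
    rw [← Nat.mul_add, Nat.sub_add_cancel (by omega : Q ≤ m)]
  have e7 : (k - 1) * m - 1 = k * (m - Q) := by omega
  have hs : ((k - 1) * m - 1) / k = m - Q := by
    rw [e7, Nat.mul_div_cancel_left _ (by omega : 0 < k)]
  -- membership facts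
  have hDval : ∀ u ∈ D, u.val ≤ m - 2*Q ∨ u.val = m - Q := by
    intro u hu
    rw [hD] at hu
    rcases Finset.mem_union.mp hu with h | h
    · obtain ⟨i, hi, rfl⟩ := Finset.mem_image.mp h
      left
      rw [Finset.mem_range, ht] at hi
      rw [ZMod.val_cast_of_lt (by omega : i < m)]
      omega
    · right
      rw [Finset.mem_singleton] at h
      rw [h, hs, ZMod.val_cast_of_lt (by omega : m - Q < m)]
  have hsD : ((m - Q : ℕ) : ZMod m) ∈ D := by
    rw [hD]
    apply Finset.mem_union_right
    rw [hs]
    exact Finset.mem_singleton_self _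
  have hall : ∀ (i : Fin k) (j : Fin n), a j + (i : ℕ) • c j ∈ D :=
    lemAll D hdvd a c hmem
  have hallval : ∀ (j : Fin n) (i : ℕ), i ≤ k - 1 →
      ((a j + i • c j).val ≤ m - 2*Q ∨ (a j + i • c j).val = m - Q) := by
    intro j i hi
    have hik : i < k := by omega
    have h := hDval _ (hall ⟨i, hik⟩ j)
    simpa using h
  by_cases hshit : ∃ (i : Fin k) (j : Fin n), c j ≠ 0 ∧
      a j + (i : ℕ) • c j = ((m - Q : ℕ) : ZMod m)
  · obtain ⟨i₁, j₁, hcj₁, hj₁⟩ := hshit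
    apply lemE D hdvd a c hmem _ hsD (⟨0, by omega⟩ : Fin k) ?_ i₁ j₁ hcj₁ hj₁
    intro j hcj heq
    have h0 : (a j).val = m - Q := by
      have : a j = ((m - Q : ℕ) : ZMod m) := by
        have h2 : ((⟨0, by omega⟩ : Fin k) : ℕ) = 0 := rfl
        rw [h2, zero_smul, add_zero] at heq
        exact heq
      rw [this, ZMod.val_cast_of_lt (by omega : m - Q < m)]
    exact lemB hk hpf hQ hQ2 (a j) (c j) hcj (hallval j) h0
  · -- no coordinate ever equals s
    have hvle : ∀ (j : Fin n), c j ≠ 0 → ∀ (i : ℕ), i ≤ k - 1 →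
        (a j + i • c j).val ≤ m - 2*Q := by
      intro j hcj i hi
      rcases hallval j i hi with h | h
      · exact h
      · exfalso
        apply hshit
        refine ⟨⟨i, by omega⟩, j, hcj, ?_⟩
        have h2 : ((⟨i, by omega⟩ : Fin k) : ℕ) = i := rfl
        rw [h2, ← h]
        exact (ZMod.natCast_rightInverse _).symm
    have hJ : ∃ j, c j ≠ 0 := by
      by_contra h
      push_neg at h
      exact hc (funext fun j => h j)
    obtain ⟨j₀, hj₀⟩ := hJ
    set S := (Finset.univ ×ˢ Finset.univ.filter (fun j : Fin n => c j ≠ 0)).image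
        (fun q : Fin k × Fin n => (a q.2 + (q.1 : ℕ) • c q.2).val) with hSdef
    have hSne : S.Nonempty := by
      refine ⟨_, Finset.mem_image.mpr ⟨((⟨0, by omega⟩ : Fin k), j₀), ?_, rfl⟩⟩
      simp only [Finset.mem_product, Finset.mem_univ, Finset.mem_filter, true_and]
      exact hj₀
    set V := S.max' hSne with hVdef
    obtain ⟨⟨i₁, j₁⟩, hq, hqv⟩ := Finset.mem_image.mp (S.max'_mem hSne)
    simp only [Finset.mem_product, Finset.mem_filter, Finset.mem_univ, true_and] at hq
    apply lemE D hdvd a c hmem (a j₁ + (i₁ : ℕ) • c j₁) (hall i₁ j₁)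
      (⟨k/2, by omega⟩ : Fin k) ?_ i₁ j₁ hq rfl
    intro j hcj heq
    have hkk : ((⟨k/2, by omega⟩ : Fin k) : ℕ) = k / 2 := rfl
    rw [hkk] at heq
    have hveq : (a j + (k/2 : ℕ) • c j).val = V := by
      rw [heq, hqv]
    apply lemC hk hk2 hpf hQ hQ2 (a j) (c j) hcj (hvle j hcj)
    intro i hi
    rw [hveq]
    apply Finset.le_max'
    apply Finset.mem_image.mpr
    refine ⟨(⟨i, by omega⟩, j), ?_, rfl⟩
    simp only [Finset.mem_product, Finset.mem_univ, Finset.mem_filter, true_and]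
    exact hcj
end

section
/- Let $k \geq 4$ be even, $m \equiv -1 \pmod k$ with least prime factor of $m$ at least $k$, and set $h = \frac{(k-1)m - 1}{k}$ and $D = \{0, 1, \ldots, \lfloor \frac{k-2}{k} m \rfloor\} \cup \{h\} \subseteq \mathbb{Z}/m\mathbb{Z}$. Then there is no arithmetic progression $v_1, v_2, \ldots, v_k$ in $\mathbb{Z}/m\mathbb{Z}$ with nonzero common difference such that $v_1 = h$ and all terms lie in $D$. -/
/-- Even-k lemma: no non-constant `k`-term AP in `ℤ/mℤ` with all terms in
`D = {0,…,⌊(k-2)m/k⌋} ∪ {h}` can start at `h = ((k-1)m-1)/k`. -/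
theorem stmt7 (m k : ℕ) (hm : 0 < m) (hk : 4 ≤ k) (hkeven : Even k)
    (hmk : m % k = k - 1) (hpf : k ≤ m.minFac)
    (h : ℕ) (hh : h = ((k - 1) * m - 1) / k)
    (D : Finset (ZMod m))
    (hD : D = (Finset.range ((k - 2) * m / k + 1)).image (fun i : ℕ => (i : ZMod m))
      ∪ {(h : ZMod m)})
    (c : ZMod m) (hc : c ≠ 0)
    (hmem : ∀ i : Fin k, ((h : ZMod m) + (i : ℕ) • c) ∈ D) :
    False := by
  obtain ⟨j, rfl⟩ : ∃ j, k = j + 3 := ⟨k - 3, by omega⟩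
  haveI : NeZero m := ⟨hm.ne'⟩
  have hm1 : m ≠ 1 := by
    rintro rfl
    exact hc (Subsingleton.elim c 0)
  have hcn0 : 0 < c.val := ZMod.val_pos.mpr hc
  have hcnm : c.val < m := ZMod.val_lt c
  set cn := c.val with hcn
  have h31 : j + 3 - 1 = j + 2 := by omega
  have h32 : j + 3 - 2 = j + 1 := by omega
  -- arithmetic setup
  have hm0' := Nat.div_add_mod m (j + 3)
  obtain ⟨q0, hq0⟩ : ∃ x, m / (j + 3) = x := ⟨_, rfl⟩
  rw [hq0] at hm0'
  have hm0 : m = (j + 3) * q0 + (j + 2) := by omega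
  set d := q0 + 1 with hd
  obtain ⟨B, hB⟩ : ∃ x, (j + 3 - 2) * m / (j + 3) = x := ⟨_, rfl⟩
  rw [hB] at hD
  have e0 : (j + 2) * m = (j + 3) * ((j + 2) * q0 + (j + 1)) + 1 := by
    rw [hm0]; ring
  have hhval : h = (j + 2) * q0 + (j + 1) := by
    rw [hh, h31, e0, Nat.add_sub_cancel,
      Nat.mul_div_cancel_left _ (by omega : 0 < j + 3)]
  have eB : (j + 1) * m = (j + 3) * ((j + 1) * q0 + j) + 2 := by
    rw [hm0]; ring
  have hBval : B = (j + 1) * q0 + j := by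
    rw [← hB, h32, eB, Nat.mul_add_div (by omega : 0 < j + 3),
      Nat.div_eq_of_lt (by omega), add_zero]
  have hhd : h + d = m := by rw [hhval, hd, hm0]; ring
  have hBd : B + d = h := by rw [hBval, hhval, hd]; ring
  have hkd : (j + 2) * d = h + 1 := by rw [hhval, hd]; ring
  have hd1 : 1 ≤ d := by omega
  -- membership, in ℕ terms
  have key : ∀ i : ℕ, i < j + 3 → ((h + i * cn) % m ≤ B ∨ (h + i * cn) % m = h) := by
    intro i hi
    have hx := hmem ⟨i, hi⟩
    rw [hD] at hx
    have hcast : (h : ZMod m) + i • c = ((h + i * cn : ℕ) : ZMod m) := by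
      rw [hcn]
      push_cast [nsmul_eq_mul, ZMod.natCast_val, ZMod.cast_id]
      ring
    rw [show ((⟨i, hi⟩ : Fin (j + 3)) : ℕ) = i from rfl, hcast] at hx
    rcases Finset.mem_union.mp hx with hx | hx
    · obtain ⟨a, ha, hax⟩ := Finset.mem_image.mp hx
      have haB : a < B + 1 := Finset.mem_range.mp ha
      have hv := congrArg ZMod.val hax
      rw [ZMod.val_natCast, ZMod.val_natCast] at hv
      left
      calc (h + i * cn) % m = a % m := hv.symm
        _ ≤ a := Nat.mod_le a m
        _ ≤ B := by omega
    · right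
      rw [Finset.mem_singleton] at hx
      have hv := congrArg ZMod.val hx
      rw [ZMod.val_natCast, ZMod.val_natCast] at hv
      rw [hv, Nat.mod_eq_of_lt (by omega : h < m)]
  -- key2 : for 0 < i < k, d ≤ (i*cn)%m ≤ h
  have key2 : ∀ i : ℕ, 0 < i → i < j + 3 → d ≤ (i * cn) % m ∧ (i * cn) % m ≤ h := by
    intro i hi0 hik
    have hco : Nat.Coprime m i := by
      by_contra hnc
      have hgpos : 0 < Nat.gcd m i := Nat.gcd_pos_of_pos_right m hi0
      have hg1 : Nat.gcd m i ≠ 1 := hnc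
      have hg2 : 2 ≤ Nat.gcd m i := by omega
      have h1 : m.minFac ≤ Nat.gcd m i := Nat.minFac_le_of_dvd hg2 (Nat.gcd_dvd_left m i)
      have h2 : Nat.gcd m i ≤ i := Nat.le_of_dvd hi0 (Nat.gcd_dvd_right m i)
      omega
    have hne : (i * cn) % m ≠ 0 := by
      intro h0
      have hdvd : m ∣ i * cn := Nat.dvd_of_mod_eq_zero h0
      have hdc : m ∣ cn := (Nat.Coprime.dvd_of_dvd_mul_left hco hdvd)
      have := Nat.le_of_dvd hcn0 hdc
      omega
    have hk1 := key i hik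
    have hrm : (i * cn) % m < m := Nat.mod_lt _ hm
    have hx : (h + i * cn) % m = (h + (i * cn) % m) % m := by
      rw [Nat.add_mod h (i * cn) m, Nat.mod_eq_of_lt (by omega : h < m)]
    rw [hx] at hk1
    obtain ⟨r, hr⟩ : ∃ x, (i * cn) % m = x := ⟨_, rfl⟩
    rw [hr] at hk1 hne hrm ⊢
    have hdm := Nat.div_add_mod (h + r) m
    have hq1 : (h + r) / m ≤ 1 := by
      have := (Nat.div_lt_iff_lt_mul hm).mpr (by omega : h + r < 2 * m)
      omega
    obtain ⟨x, hx2⟩ : ∃ x, (h + r) % m = x := ⟨_, rfl⟩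
    rw [hx2] at hdm hk1
    rcases Nat.le_one_iff_eq_zero_or_eq_one.mp hq1 with hq | hq <;> rw [hq] at hdm <;> omega
  -- pigeonhole
  have hmaps : ∀ a ∈ Finset.Ioo 0 (j + 3), (a * cn) % m / d ∈ Finset.Icc 1 (j + 1) := by
    intro a ha
    rw [Finset.mem_Ioo] at ha
    obtain ⟨h1, h2⟩ := key2 a ha.1 ha.2
    rw [Finset.mem_Icc]
    refine ⟨(Nat.one_le_div_iff (by omega)).mpr h1, ?_⟩
    have hlt : (a * cn) % m / d < j + 2 :=
      (Nat.div_lt_iff_lt_mul (by omega : 0 < d)).mpr (by rw [hkd]; omega)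
    omega
  have hcard : (Finset.Icc 1 (j + 1)).card < (Finset.Ioo 0 (j + 3)).card := by
    rw [Nat.card_Icc, Nat.card_Ioo]; omega
  obtain ⟨a, ha, b, hb, hne, heq⟩ :=
    Finset.exists_ne_map_eq_of_card_lt_of_maps_to hcard hmaps
  rw [Finset.mem_Ioo] at ha hb
  have final : ∀ a b : ℕ, 0 < a → a < b → b < j + 3 →
      (a * cn) % m / d = (b * cn) % m / d → False := by
    intro a b ha0 hab hbk heq
    obtain ⟨hda, hah⟩ := key2 a ha0 (by omega)
    obtain ⟨hdb, hbh⟩ := key2 b (by omega) hbk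
    obtain ⟨hdt, hth⟩ := key2 (b - a) (by omega) (by omega)
    have hsum : (((b - a) * cn) % m + (a * cn) % m) % m = (b * cn) % m := by
      rw [← Nat.add_mod, ← Nat.add_mul, Nat.sub_add_cancel hab.le]
    have e1 := Nat.mod_add_div ((a * cn) % m) d
    have e2 := Nat.mod_add_div ((b * cn) % m) d
    rw [← heq] at e2
    have s1 : (a * cn) % m % d < d := Nat.mod_lt _ (by omega)
    have s2 : (b * cn) % m % d < d := Nat.mod_lt _ (by omega)
    have hdm := Nat.div_add_mod (((b - a) * cn) % m + (a * cn) % m) m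
    rw [hsum] at hdm
    have hq1 : (((b - a) * cn) % m + (a * cn) % m) / m ≤ 1 := by
      have hlt : ((b - a) * cn) % m + (a * cn) % m < 2 * m := by
        have := Nat.mod_lt ((b - a) * cn) hm
        have := Nat.mod_lt (a * cn) hm
        omega
      have := (Nat.div_lt_iff_lt_mul hm).mpr hlt
      omega
    -- abstract atoms
    obtain ⟨ra, hra⟩ : ∃ x, (a * cn) % m = x := ⟨_, rfl⟩
    obtain ⟨rb, hrb⟩ : ∃ x, (b * cn) % m = x := ⟨_, rfl⟩
    obtain ⟨rt, hrt⟩ : ∃ x, ((b - a) * cn) % m = x := ⟨_, rfl⟩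
    rw [hra] at hda hah e1 s1 e2 hdm hq1
    rw [hrb] at hdb hbh e2 s2
    rw [hrt] at hdt hth hdm hq1
    obtain ⟨E, hE⟩ : ∃ x, d * (ra / d) = x := ⟨_, rfl⟩
    rw [hE] at e1 e2
    obtain ⟨sa, hsa⟩ : ∃ x, ra % d = x := ⟨_, rfl⟩
    obtain ⟨sb, hsb⟩ : ∃ x, rb % d = x := ⟨_, rfl⟩
    rw [hsa] at e1 s1
    rw [hsb] at e2 s2
    obtain ⟨qq, hqq⟩ : ∃ x, (rt + ra) / m = x := ⟨_, rfl⟩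
    rw [hqq] at hdm hq1
    rcases Nat.le_one_iff_eq_zero_or_eq_one.mp hq1 with hq | hq <;> rw [hq] at hdm <;> omega
  rcases Nat.lt_or_ge a b with hab | hab
  · exact final a b ha.1 hab hb.2 heq
  · exact final b a hb.1 (by omega) ha.2 heq.symm
end

section
/- Let $p = 11$ and $D = \{0,1,2,3,4,5\} \subseteq \mathbb{Z}/11\mathbb{Z}$. For any positive integer $n$ divisible by $6$, the set $S(D,n)$ of vectors in $(\mathbb{Z}/11\mathbb{Z})^n$ in which each digit $0,1,2,3,4,5$ occurs exactly $n/6$ times contains no non-constant $3$-term arithmetic progression. -/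
lemma key11 : ∀ x y z : ZMod 11, x ∈ ({0,1,2,3,4,5} : Finset (ZMod 11)) →
    y ∈ ({0,1,2,3,4,5} : Finset (ZMod 11)) → z ∈ ({0,1,2,3,4,5} : Finset (ZMod 11)) →
    x + z = y + y → (y.val : ℤ) - x.val = (z.val : ℤ) - y.val := by decide

/-- For `p = 11`, `D = {0,1,2,3,4,5}`: `S(D,n)` contains no non-constant
3-term arithmetic progression. -/
theorem stmt9 (D : Finset (ZMod 11)) (hD : D = {0, 1, 2, 3, 4, 5})
    (n : ℕ) (hn : 0 < n) (hdvd : 6 ∣ n)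
    (a c : Fin n → ZMod 11) (hc : c ≠ 0)
    (hmem : ∀ i : Fin 3, ∀ d ∈ D,
      (Finset.univ.filter (fun j : Fin n => a j + (i : ℕ) • c j = d)).card = n / 6) :
    False := by
  set v : Fin 3 → Fin n → ZMod 11 := fun i j => a j + (i : ℕ) • c j with hv
  -- step 1: all coordinates in D
  have hall : ∀ i : Fin 3, ∀ j : Fin n, v i j ∈ D := by
    intro i
    have hsplit : (Finset.univ : Finset (Fin n)).filter (fun j => v i j ∈ D)
        = D.biUnion (fun d => Finset.univ.filter (fun j => v i j = d)) := by
      ext j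
      simp only [Finset.mem_filter, Finset.mem_biUnion, Finset.mem_univ, true_and]
      constructor
      · intro h; exact ⟨v i j, h, rfl⟩
      · rintro ⟨d, hd, rfl⟩; exact hd
    have hDcard : D.card = 6 := by subst hD; decide
    have hcard : ((Finset.univ : Finset (Fin n)).filter (fun j => v i j ∈ D)).card = n := by
      rw [hsplit, Finset.card_biUnion]
      · rw [Finset.sum_congr rfl (fun d hd => hmem i d hd), Finset.sum_const, hDcard,
          smul_eq_mul, Nat.mul_div_cancel' hdvd]
      · intro d1 _ d2 _ hne
        simp only [Finset.disjoint_left, Finset.mem_filter]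
        rintro j ⟨-, h1⟩ ⟨-, h2⟩
        exact hne (h1 ▸ h2)
    have huniv := Finset.eq_univ_of_card _ (by rw [hcard, Fintype.card_fin])
    intro j
    have hj : j ∈ (Finset.univ : Finset (Fin n)).filter (fun j => v i j ∈ D) := by
      rw [huniv]; exact Finset.mem_univ j
    exact (Finset.mem_filter.mp hj).2
  -- arithmetic structure per coordinate
  have hAP : ∀ j, v 0 j + v 2 j = v 1 j + v 1 j := by
    intro j
    show a j + ((0 : Fin 3) : ℕ) • c j + (a j + ((2 : Fin 3) : ℕ) • c j)
        = a j + ((1 : Fin 3) : ℕ) • c j + (a j + ((1 : Fin 3) : ℕ) • c j)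
    norm_num
    ring
  -- fiberwise sums are the same for all i
  have hsum : ∀ (f : ZMod 11 → ℤ) (i : Fin 3),
      ∑ j, f (v i j) = ∑ d ∈ D, (n / 6 : ℕ) • f d := by
    intro f i
    rw [← Finset.sum_fiberwise_of_maps_to (fun j _ => hall i j) (fun j => f (v i j))]
    refine Finset.sum_congr rfl (fun d hd => ?_)
    rw [Finset.sum_congr rfl (fun j hj => by
      rw [(Finset.mem_filter.mp hj).2]), Finset.sum_const, hmem i d hd]
  set e : Fin n → ℤ := fun j => ((v 1 j).val : ℤ) - ((v 0 j).val : ℤ) with he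
  have hez : ∀ j, ((v 2 j).val : ℤ) - ((v 1 j).val : ℤ) = e j := by
    intro j
    exact (key11 (v 0 j) (v 1 j) (v 2 j) (hD ▸ hall 0 j) (hD ▸ hall 1 j)
      (hD ▸ hall 2 j) (hAP j)).symm
  have hsq : ∑ j, 2 * e j ^ 2 = 0 := by
    have h2 : ∀ j : Fin n, 2 * e j ^ 2 = ((v 0 j).val : ℤ) ^ 2 + ((v 2 j).val : ℤ) ^ 2
        - 2 * ((v 1 j).val : ℤ) ^ 2 := by
      intro j
      have h1 := hez j
      have hx : e j = ((v 1 j).val : ℤ) - ((v 0 j).val : ℤ) := rfl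
      rw [hx] at h1 ⊢
      nlinarith [h1]
    rw [Finset.sum_congr rfl (fun j _ => h2 j)]
    have q0 : (∑ j, ((v 0 j).val : ℤ) ^ 2) = ∑ d ∈ D, (n / 6 : ℕ) • ((d.val : ℤ) ^ 2) :=
      hsum (fun d => (d.val : ℤ) ^ 2) 0
    have q1 : (∑ j, ((v 1 j).val : ℤ) ^ 2) = ∑ d ∈ D, (n / 6 : ℕ) • ((d.val : ℤ) ^ 2) :=
      hsum (fun d => (d.val : ℤ) ^ 2) 1
    have q2 : (∑ j, ((v 2 j).val : ℤ) ^ 2) = ∑ d ∈ D, (n / 6 : ℕ) • ((d.val : ℤ) ^ 2) :=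
      hsum (fun d => (d.val : ℤ) ^ 2) 2
    have hexp : ∑ j, (((v 0 j).val : ℤ) ^ 2 + ((v 2 j).val : ℤ) ^ 2
        - 2 * ((v 1 j).val : ℤ) ^ 2)
        = (∑ j, ((v 0 j).val : ℤ) ^ 2) + (∑ j, ((v 2 j).val : ℤ) ^ 2)
          - 2 * (∑ j, ((v 1 j).val : ℤ) ^ 2) := by
      rw [Finset.sum_sub_distrib, Finset.sum_add_distrib, Finset.mul_sum]
    rw [hexp, q0, q1, q2]
    ring
  have hez0 : ∀ j, e j = 0 := by
    intro j
    have h := (Finset.sum_eq_zero_iff_of_nonneg (fun j _ => by positivity)).mp hsq j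
      (Finset.mem_univ j)
    nlinarith [h]
  apply hc
  funext j
  have h := hez0 j
  rw [he] at h
  have hval : (v 1 j).val = (v 0 j).val := by exact_mod_cast sub_eq_zero.mp h
  have : v 1 j = v 0 j := ZMod.val_injective _ hval
  have : a j + ((1 : Fin 3) : ℕ) • c j = a j + ((0 : Fin 3) : ℕ) • c j := this
  simpa using this
end

section
/- For $m = 5$ and $k = 3$: the set $D = \{0, 1, 2\} \subseteq \mathbb{Z}/5\mathbb{Z}$ is admissible, i.e., for every $n$ divisible by $3$, the set $S(D, n)$ of vectors in $(\mathbb{Z}/5\mathbb{Z})^n$ with each of $0,1,2$ occurring exactly $n/3$ times contains no non-constant $3$-term arithmetic progression; moreover no $4$-element subset $D' \subseteq \mathbb{Z}/5\mathbb{Z}$ is admissible for $k = 3$. -/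
-- pointwise facts over ZMod 5
lemma pt1 : ∀ x y : ZMod 5, x ∈ ({0,1,2} : Finset (ZMod 5)) →
    x + y ∈ ({0,1,2} : Finset (ZMod 5)) → x + 2 * y ∈ ({0,1,2} : Finset (ZMod 5)) →
    x = 1 → x + y = 1 := by decide

lemma pt2 : ∀ x y : ZMod 5, x ∈ ({0,1,2} : Finset (ZMod 5)) →
    x + y ∈ ({0,1,2} : Finset (ZMod 5)) → x + 2 * y ∈ ({0,1,2} : Finset (ZMod 5)) →
    (x + y = 1 → x = 1) → y = 0 := by decide

lemma key_count {n : ℕ} (hn : 3 ∣ n) (v : Fin n → ZMod 5)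
    (hv : ∀ d ∈ ({0,1,2} : Finset (ZMod 5)),
      (Finset.univ.filter (fun j => v j = d)).card = n / 3) :
    ∀ j, v j ∈ ({0,1,2} : Finset (ZMod 5)) := by
  intro j
  by_contra hj
  set s := Finset.univ.filter (fun j => v j ∈ ({0,1,2} : Finset (ZMod 5))) with hs
  have hcard : s.card = n := by
    have h1 : s.card = ∑ d ∈ ({0,1,2} : Finset (ZMod 5)),
        (s.filter (fun x => v x = d)).card :=
      Finset.card_eq_sum_card_fiberwise (fun x hx => (Finset.mem_filter.mp hx).2)
    have h2 : ∀ d ∈ ({0,1,2} : Finset (ZMod 5)),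
        s.filter (fun x => v x = d) = Finset.univ.filter (fun x => v x = d) := by
      intro d hd
      rw [hs, Finset.filter_filter]
      apply Finset.filter_congr
      intro x _
      constructor
      · rintro ⟨_, h⟩; exact h
      · rintro h; exact ⟨h ▸ hd, h⟩
    rw [Finset.sum_congr rfl (fun d hd => by rw [h2 d hd, hv d hd])] at h1
    rw [h1, Finset.sum_const]
    have : ({0,1,2} : Finset (ZMod 5)).card = 3 := by decide
    rw [this, smul_eq_mul]
    exact Nat.mul_div_cancel' hn
  have hsub : s ⊆ Finset.univ.erase j := by
    intro x hx
    refine Finset.mem_erase.mpr ⟨?_, Finset.mem_univ x⟩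
    rintro rfl
    exact hj (Finset.mem_filter.mp hx).2
  have := Finset.card_le_card hsub
  rw [hcard, Finset.card_erase_of_mem (Finset.mem_univ j), Finset.card_univ,
    Fintype.card_fin] at this
  have hn0 : 0 < n := Fin.pos j
  omega

/-- For `m = 5`, `k = 3`: the digit set `{0,1,2}` is admissible, and no
4-element digit set modulo 5 is admissible. -/
theorem stmt16 :
    (∀ n : ℕ, 0 < n → 3 ∣ n →
      ∀ a c : Fin n → ZMod 5, c ≠ 0 →
        ¬ (∀ i : Fin 3, ∀ d ∈ ({0, 1, 2} : Finset (ZMod 5)),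
          (Finset.univ.filter (fun j : Fin n => a j + (i : ℕ) • c j = d)).card = n / 3)) ∧
    ∀ D' : Finset (ZMod 5), D'.card = 4 →
      ∃ n : ℕ, 0 < n ∧ 4 ∣ n ∧
        ∃ a c : Fin n → ZMod 5, c ≠ 0 ∧
          (∀ i : Fin 3, ∀ d ∈ D',
            (Finset.univ.filter (fun j : Fin n => a j + (i : ℕ) • c j = d)).card = n / 4) := by
  constructor
  · intro n hn h3 a c hc H
    have H0 : ∀ d ∈ ({0,1,2} : Finset (ZMod 5)),
        (Finset.univ.filter (fun j => a j = d)).card = n / 3 := by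
      have := H 0
      simpa using this
    have H1 : ∀ d ∈ ({0,1,2} : Finset (ZMod 5)),
        (Finset.univ.filter (fun j => a j + c j = d)).card = n / 3 := by
      have := H 1
      simpa using this
    have H2 : ∀ d ∈ ({0,1,2} : Finset (ZMod 5)),
        (Finset.univ.filter (fun j => a j + 2 * c j = d)).card = n / 3 := by
      have := H 2
      simpa [nsmul_eq_mul] using this
    have m0 := key_count h3 _ H0
    have m1 := key_count h3 _ H1
    have m2 := key_count h3 _ H2
    have hfil : Finset.univ.filter (fun j => a j = 1)
        = Finset.univ.filter (fun j => a j + c j = 1) := by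
      apply Finset.eq_of_subset_of_card_le
      · intro x hx
        simp only [Finset.mem_filter] at hx ⊢
        exact ⟨hx.1, pt1 (a x) (c x) (m0 x) (m1 x) (m2 x) hx.2⟩
      · rw [H0 1 (by decide), H1 1 (by decide)]
    apply hc
    funext j
    refine pt2 (a j) (c j) (m0 j) (m1 j) (m2 j) ?_
    intro h
    have : j ∈ Finset.univ.filter (fun j => a j = 1) := by
      rw [hfil]
      simp [h]
    simpa using this
  · intro D' hD
    have hcompl : D'ᶜ.card = 1 := by
      rw [Finset.card_compl, hD]
      rfl
    obtain ⟨t, ht⟩ := Finset.card_eq_one.mp hcompl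
    have hD' : D' = {t}ᶜ := by rw [← ht, compl_compl]
    subst hD'
    refine ⟨4, by norm_num, ⟨1, rfl⟩, fun j => t + (j.val + 1 : ZMod 5),
      fun j => ((j.val : ℕ) + 1 : ZMod 5), ?_, ?_⟩
    · intro h
      have := congrFun h 0
      simp at this
      revert this
      decide
    · intro i d hd
      revert hd
      fin_cases i <;> revert d <;> revert t <;> decide
end

section
/- Let $D \subseteq \mathbb{Z}/m\mathbb{Z}$ and $k \geq 3$, and let $P_k(D)$ be the set of non-constant $k$-term arithmetic progressions in $\mathbb{Z}/m\mathbb{Z}$ all of whose terms lie in $D$. Then $D$ is admissible (i.e., $S(D,n)$ contains no non-constant $k$-term AP for all $n$ with $|D| \mid n$) if and only if the only solution in nonnegative integers $(x_v)_{v \in P_k(D)}$ to the system of equations $\sum_{v \in P_k(D),\, v_i = d} x_v = \sum_{v \in P_k(D),\, v_j = d} x_v$ for all $d \in D$ and all $1 \leq i < j \leq k$ is the trivial solution $x = 0$. -/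
open Finset in
private lemma sumGet' {α : Type*} (g : α → ℕ) :
    ∀ (L : List α), ∑ j : Fin L.length, g (L.get j) = (L.map g).sum := by
  intro L
  induction L with
  | nil => simp
  | cons a t ih => simpa [Fin.sum_univ_succ] using ih

private lemma sumFlatMap' {α β : Type*} (f : β → List α) (g : α → ℕ) :
    ∀ l : List β, ((l.flatMap f).map g).sum
      = (l.map (fun b => ((f b).map g).sum)).sum := by
  intro l
  induction l with
  | nil => simp
  | cons b t ih => simp [ih]

open Finset in
private lemma sum_toList' {α M : Type*} [AddCommMonoid M] (s : Finset α) (f : α → M) :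
    (s.toList.map f).sum = ∑ a ∈ s, f a := by
  rw [Finset.sum, ← Multiset.sum_coe, ← Multiset.map_coe, Finset.coe_toList]

open Finset in
private theorem dir1 (m k : ℕ) [NeZero m] (hk : 3 ≤ k)
    (D : Finset (ZMod m)) (hD : D.Nonempty)
    (P : Finset (Fin k → ZMod m))
    (hP : P = Finset.univ.filter (fun v : Fin k → ZMod m =>
      (∀ i, v i ∈ D) ∧ ∃ c : ZMod m, c ≠ 0 ∧ ∀ i : Fin k, v i = v ⟨0, Nat.lt_of_lt_of_le (Nat.succ_pos 2) hk⟩ + (i : ℕ) • c))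
    (h : ∀ n : ℕ, 0 < n → D.card ∣ n →
      ∀ a c : Fin n → ZMod m, c ≠ 0 →
        ¬ (∀ i : Fin k, ∀ d ∈ D,
          (Finset.univ.filter (fun j : Fin n => a j + (i : ℕ) • c j = d)).card
            = n / D.card)) :
    (∀ x : (Fin k → ZMod m) → ℕ,
      (∀ v, x v ≠ 0 → v ∈ P) →
      (∀ d ∈ D, ∀ i j : Fin k, i < j →
        ∑ v ∈ P.filter (fun v => v i = d), x v = ∑ v ∈ P.filter (fun v => v j = d), x v) →
      x = 0) := by
  intro x hsupp heq
  by_contra hx0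
  obtain ⟨v₀, hv₀⟩ : ∃ v, x v ≠ 0 := by
    by_contra hcon
    push_neg at hcon
    exact hx0 (funext fun v => hcon v)
  set i0 : Fin k := ⟨0, by omega⟩ with hi0
  set i1 : Fin k := ⟨1, by omega⟩ with hi1
  set step : (Fin k → ZMod m) → ZMod m := fun v => v i1 - v i0 with hstep_def
  -- every member of P is a genuine AP with step `step v ≠ 0`
  have hstep : ∀ v ∈ P, (∀ i : Fin k, v i = v i0 + (i : ℕ) • step v) ∧ step v ≠ 0 := by
    intro v hv
    rw [hP, Finset.mem_filter] at hv
    obtain ⟨-, -, cc, hcc0, hccv⟩ := hv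
    have h1 : step v = cc := by
      have h2 := hccv i1
      rw [hstep_def]
      simp only [hi1] at h2 ⊢
      rw [h2]
      simp
    constructor
    · intro i
      rw [h1]
      exact hccv i
    · rw [h1]; exact hcc0
  have hmem0 : ∀ v ∈ P, v i0 ∈ D := by
    intro v hv
    rw [hP, Finset.mem_filter] at hv
    exact hv.2.1 i0
  set S : ZMod m → ℕ := fun d => ∑ v ∈ P.filter (fun v => v i0 = d), x v with hS_def
  have hSi : ∀ d ∈ D, ∀ i : Fin k, ∑ v ∈ P.filter (fun v => v i = d), x v = S d := by
    intro d hd i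
    rcases Nat.eq_zero_or_pos i.val with h0 | hpos
    · have : i = i0 := Fin.ext h0
      rw [this]
    · exact (heq d hd i0 i (by simpa [Fin.lt_def, hi0] using hpos)).symm
  set M : ℕ := ∑ v ∈ P, x v with hM_def
  have hSM : ∀ d, S d ≤ M := fun d =>
    Finset.sum_le_sum_of_subset (Finset.filter_subset _ _)
  have hMpos : 0 < M := by
    have := Finset.single_le_sum (f := x) (fun v _ => Nat.zero_le _) (hsupp v₀ hv₀)
    omega
  have hMS : ∑ d ∈ D, S d = M := by
    rw [hM_def, hS_def]
    exact Finset.sum_fiberwise_of_maps_to hmem0 x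
  -- construct the configuration
  set L₁ : List (ZMod m × ZMod m) :=
    P.toList.flatMap (fun v => List.replicate (x v) (v i0, step v)) with hL₁
  set L₂ : List (ZMod m × ZMod m) :=
    D.toList.flatMap (fun d => List.replicate (M - S d) (d, (0 : ZMod m))) with hL₂
  set L : List (ZMod m × ZMod m) := L₁ ++ L₂ with hL
  set n : ℕ := L.length with hn_def
  have hlen : n = D.card * M := by
    rw [hn_def, hL, List.length_append, hL₁, hL₂, List.length_flatMap,
      List.length_flatMap]
    have e1 : (List.map (List.length ∘ fun v => List.replicate (x v) (v i0, step v))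
        P.toList).sum = M := by
      rw [show (List.length ∘ fun v => List.replicate (x v) (v i0, step v))
          = fun v => x v from funext fun v => List.length_replicate]
      rw [sum_toList', hM_def]
    have e2 : (List.map (List.length ∘ fun d => List.replicate (M - S d) (d, (0 : ZMod m)))
        D.toList).sum = ∑ d ∈ D, (M - S d) := by
      rw [show (List.length ∘ fun d => List.replicate (M - S d) (d, (0 : ZMod m)))
          = fun d => M - S d from funext fun d => List.length_replicate]
      rw [sum_toList']
    have h3 : ∑ d ∈ D, (S d + (M - S d)) = ∑ d ∈ D, M :=
      Finset.sum_congr rfl (fun d _ => Nat.add_sub_cancel' (hSM d))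
    have h4 : ∑ d ∈ D, S d + ∑ d ∈ D, (M - S d) = D.card * M := by
      rw [← Finset.sum_add_distrib, h3, Finset.sum_const, smul_eq_mul]
    simp only [Function.comp_def] at e1 e2
    simp only [e1, e2]
    rw [hMS] at h4
    exact h4
  have hnpos : 0 < n := by
    rw [hlen]
    exact Nat.mul_pos hD.card_pos hMpos
  have hndvd : D.card ∣ n := ⟨M, hlen⟩
  have hndiv : n / D.card = M := by
    rw [hlen, Nat.mul_div_cancel_left _ hD.card_pos]
  set a : Fin n → ZMod m := fun j => (L.get j).1 with ha_def
  set c : Fin n → ZMod m := fun j => (L.get j).2 with hc_def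
  -- c is nonzero
  have hv₀P := hsupp v₀ hv₀
  have hcne : c ≠ 0 := by
    have hmem : (v₀ i0, step v₀) ∈ L := by
      rw [hL]
      apply List.mem_append_left
      rw [hL₁, List.mem_flatMap]
      exact ⟨v₀, Finset.mem_toList.2 hv₀P,
        List.mem_replicate.2 ⟨hv₀, rfl⟩⟩
    obtain ⟨j, hj⟩ := List.get_of_mem hmem
    intro hcon
    have : c j = 0 := congrFun hcon j
    rw [hc_def] at this
    simp only [hj] at this
    exact (hstep v₀ hv₀P).2 this
  -- the counting property
  have hcount : ∀ i : Fin k, ∀ d ∈ D,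
      (Finset.univ.filter (fun j : Fin n => a j + (i : ℕ) • c j = d)).card
        = n / D.card := by
    intro i d hd
    rw [hndiv]
    set g : ZMod m × ZMod m → ℕ := fun p => if p.1 + (i : ℕ) • p.2 = d then 1 else 0
      with hg
    have e0 : (Finset.univ.filter (fun j : Fin n => a j + (i : ℕ) • c j = d)).card
        = (L.map g).sum := by
      rw [Finset.card_filter, ← sumGet' g L]
    rw [e0, hL, List.map_append, List.sum_append, hL₁, hL₂, sumFlatMap', sumFlatMap']
    have e1 : (List.map (fun v => ((List.replicate (x v) (v i0, step v)).map g).sum)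
        P.toList).sum = S d := by
      rw [show (fun v => ((List.replicate (x v) (v i0, step v)).map g).sum)
          = fun v => x v * g (v i0, step v) from funext fun v => by
            rw [List.map_replicate, List.sum_replicate, smul_eq_mul]]
      rw [sum_toList']
      rw [← hSi d hd i, Finset.sum_filter]
      refine Finset.sum_congr rfl fun v hv => ?_
      have hv' : v i0 + (i : ℕ) • step v = v i := ((hstep v hv).1 i).symm
      simp only [hg, hv', mul_ite, mul_one, mul_zero]
    have e2 : (List.map (fun d' => ((List.replicate (M - S d') (d', (0 : ZMod m))).map g).sum)
        D.toList).sum = M - S d := by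
      rw [show (fun d' => ((List.replicate (M - S d') (d', (0 : ZMod m))).map g).sum)
          = fun d' => (M - S d') * g (d', 0) from funext fun d' => by
            rw [List.map_replicate, List.sum_replicate, smul_eq_mul]]
      rw [sum_toList']
      have : ∀ d' ∈ D, (M - S d') * g (d', (0 : ZMod m))
          = if d' = d then M - S d' else 0 := by
        intro d' _
        rw [hg]
        simp only [smul_zero, add_zero]
        rw [mul_ite, mul_one, mul_zero]
      rw [Finset.sum_congr rfl this, Finset.sum_ite_eq' D d (fun d' => M - S d'),
        if_pos hd]
    rw [e1, e2]
    exact Nat.add_sub_cancel' (hSM d)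
  exact h n hnpos hndvd a c hcne hcount

open Finset in
private theorem dir2 (m k : ℕ) [NeZero m] (hk : 3 ≤ k)
    (D : Finset (ZMod m)) (hD : D.Nonempty)
    (P : Finset (Fin k → ZMod m))
    (hP : P = Finset.univ.filter (fun v : Fin k → ZMod m =>
      (∀ i, v i ∈ D) ∧ ∃ c : ZMod m, c ≠ 0 ∧ ∀ i : Fin k, v i = v ⟨0, Nat.lt_of_lt_of_le (Nat.succ_pos 2) hk⟩ + (i : ℕ) • c))
    (h : ∀ x : (Fin k → ZMod m) → ℕ,
      (∀ v, x v ≠ 0 → v ∈ P) →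
      (∀ d ∈ D, ∀ i j : Fin k, i < j →
        ∑ v ∈ P.filter (fun v => v i = d), x v = ∑ v ∈ P.filter (fun v => v j = d), x v) →
      x = 0) :
    (∀ n : ℕ, 0 < n → D.card ∣ n →
      ∀ a c : Fin n → ZMod m, c ≠ 0 →
        ¬ (∀ i : Fin k, ∀ d ∈ D,
          (Finset.univ.filter (fun j : Fin n => a j + (i : ℕ) • c j = d)).card
            = n / D.card)) := by
  intro n hn hdvd a c hc hcount
  set col : Fin n → Fin k → ZMod m := fun j i => a j + (i : ℕ) • c j with hcol_def
  set x : (Fin k → ZMod m) → ℕ :=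
    fun v => (Finset.univ.filter (fun j : Fin n => c j ≠ 0 ∧ col j = v)).card with hx_def
  -- Step A : all entries lie in D
  have hA : ∀ (i : Fin k) (j : Fin n), a j + (i : ℕ) • c j ∈ D := by
    intro i
    have key : (Finset.univ.filter (fun j : Fin n => a j + (i : ℕ) • c j ∈ D))
        = Finset.univ := by
      apply Finset.eq_univ_of_card
      have h1 := Finset.card_eq_sum_card_fiberwise
        (f := fun j : Fin n => a j + (i : ℕ) • c j)
        (s := Finset.univ.filter (fun j : Fin n => a j + (i : ℕ) • c j ∈ D))
        (t := D) (fun j hj => (Finset.mem_filter.1 hj).2)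
      rw [h1]
      have h2 : ∀ d ∈ D,
          ((Finset.univ.filter (fun j : Fin n => a j + (i : ℕ) • c j ∈ D)).filter
            (fun j => a j + (i : ℕ) • c j = d)).card = n / D.card := by
        intro d hd
        have hEq : ((Finset.univ.filter (fun j : Fin n => a j + (i : ℕ) • c j ∈ D)).filter
            (fun j => a j + (i : ℕ) • c j = d))
            = Finset.univ.filter (fun j : Fin n => a j + (i : ℕ) • c j = d) := by
          ext j
          simp only [Finset.mem_filter, Finset.mem_univ, true_and]
          exact ⟨fun hh => hh.2, fun hh => ⟨hh ▸ hd, hh⟩⟩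
        rw [hEq]
        exact hcount i d hd
      rw [Finset.sum_congr rfl h2, Finset.sum_const, smul_eq_mul,
        Nat.mul_div_cancel' hdvd, Fintype.card_fin]
    intro j
    have hj : j ∈ Finset.univ.filter (fun j : Fin n => a j + (i : ℕ) • c j ∈ D) := by
      rw [key]; exact Finset.mem_univ j
    exact (Finset.mem_filter.1 hj).2
  -- Step B : nonzero-step columns give progressions in P
  have hcolP : ∀ j : Fin n, c j ≠ 0 → col j ∈ P := by
    intro j hcj
    rw [hP, Finset.mem_filter]
    refine ⟨Finset.mem_univ _, fun i => hA i j, c j, hcj, fun i => ?_⟩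
    show a j + (i : ℕ) • c j = (a j + ((0 : ℕ) : ℕ) • c j) + (i : ℕ) • c j
    simp
  -- support of x
  have hsupp : ∀ v, x v ≠ 0 → v ∈ P := by
    intro v hv
    obtain ⟨j, hj⟩ := Finset.card_ne_zero.1 hv
    rw [Finset.mem_filter] at hj
    exact hj.2.2 ▸ hcolP j hj.2.1
  -- key count identity
  have key : ∀ d ∈ D, ∀ i : Fin k,
      ∑ v ∈ P.filter (fun v => v i = d), x v
        + (Finset.univ.filter (fun j : Fin n => c j = 0 ∧ a j = d)).card
        = n / D.card := by
    intro d hd i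
    set s := Finset.univ.filter (fun j : Fin n => c j ≠ 0 ∧ a j + (i : ℕ) • c j = d) with hs
    have maps : ∀ j ∈ s, col j ∈ P.filter (fun v => v i = d) := by
      intro j hj
      rw [hs, Finset.mem_filter] at hj
      exact Finset.mem_filter.2 ⟨hcolP j hj.2.1, hj.2.2⟩
    have h1 := Finset.card_eq_sum_card_fiberwise (f := col) maps
    have h2 : ∀ v ∈ P.filter (fun v => v i = d),
        (s.filter (fun j => col j = v)).card = x v := by
      intro v hv
      rw [hx_def]
      congr 1
      ext j
      simp only [hs, Finset.mem_filter, Finset.mem_univ, true_and]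
      constructor
      · rintro ⟨⟨ha1, _⟩, ha3⟩; exact ⟨ha1, ha3⟩
      · rintro ⟨ha1, ha3⟩
        refine ⟨⟨ha1, ?_⟩, ha3⟩
        have : col j i = v i := by rw [ha3]
        rw [show a j + (i : ℕ) • c j = col j i from rfl, this]
        exact (Finset.mem_filter.1 hv).2
    have hsum : ∑ v ∈ P.filter (fun v => v i = d), x v = s.card := by
      rw [h1, Finset.sum_congr rfl h2]
    have hsplit : s.card
        + (Finset.univ.filter (fun j : Fin n => c j = 0 ∧ a j = d)).card
        = (Finset.univ.filter (fun j : Fin n => a j + (i : ℕ) • c j = d)).card := by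
      have hbig := Finset.card_filter_add_card_filter_not
        (s := Finset.univ.filter (fun j : Fin n => a j + (i : ℕ) • c j = d))
        (p := fun j => c j ≠ 0)
      have e1 : (Finset.univ.filter (fun j : Fin n => a j + (i : ℕ) • c j = d)).filter
          (fun j => c j ≠ 0) = s := by
        ext j
        simp only [hs, Finset.mem_filter, Finset.mem_univ, true_and]
        tauto
      have e2 : (Finset.univ.filter (fun j : Fin n => a j + (i : ℕ) • c j = d)).filter
          (fun j => ¬ c j ≠ 0)
          = Finset.univ.filter (fun j : Fin n => c j = 0 ∧ a j = d) := by
        ext j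
        simp only [Finset.mem_filter, Finset.mem_univ, true_and, not_not]
        constructor
        · rintro ⟨hh1, hh2⟩
          refine ⟨hh2, ?_⟩
          rwa [hh2, smul_zero, add_zero] at hh1
        · rintro ⟨hh1, hh2⟩
          exact ⟨by rw [hh1, smul_zero, add_zero, hh2], hh1⟩
      rw [e1, e2] at hbig
      exact hbig
    rw [hsum, hsplit]
    exact hcount i d hd
  -- the equations hold
  have heqs : ∀ d ∈ D, ∀ i j : Fin k, i < j →
      ∑ v ∈ P.filter (fun v => v i = d), x v
        = ∑ v ∈ P.filter (fun v => v j = d), x v := by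
    intro d hd i j _
    have := (key d hd i).trans (key d hd j).symm
    exact Nat.add_right_cancel this
  have hx0 := h x hsupp heqs
  obtain ⟨j₀, hj₀⟩ := Function.ne_iff.1 hc
  have hmem : j₀ ∈ Finset.univ.filter (fun j : Fin n => c j ≠ 0 ∧ col j = col j₀) :=
    Finset.mem_filter.2 ⟨Finset.mem_univ _, hj₀, rfl⟩
  exact Finset.card_ne_zero_of_mem hmem (congrFun hx0 (col j₀))


open Finset in
/-- Admissibility of `D` is equivalent to the system of counting equations over
the non-constant `k`-term progressions in `D` having only the trivial
nonnegative integral solution. -/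
theorem stmt17 (m k : ℕ) [NeZero m] (hk : 3 ≤ k)
    (D : Finset (ZMod m)) (hD : D.Nonempty)
    (P : Finset (Fin k → ZMod m))
    (hP : P = Finset.univ.filter (fun v : Fin k → ZMod m =>
      (∀ i, v i ∈ D) ∧ ∃ c : ZMod m, c ≠ 0 ∧ ∀ i : Fin k, v i = v ⟨0, by omega⟩ + (i : ℕ) • c)) :
    (∀ n : ℕ, 0 < n → D.card ∣ n →
      ∀ a c : Fin n → ZMod m, c ≠ 0 →
        ¬ (∀ i : Fin k, ∀ d ∈ D,
          (Finset.univ.filter (fun j : Fin n => a j + (i : ℕ) • c j = d)).card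
            = n / D.card))
    ↔
    (∀ x : (Fin k → ZMod m) → ℕ,
      (∀ v, x v ≠ 0 → v ∈ P) →
      (∀ d ∈ D, ∀ i j : Fin k, i < j →
        ∑ v ∈ P.filter (fun v => v i = d), x v = ∑ v ∈ P.filter (fun v => v j = d), x v) →
      x = 0) := by
  exact ⟨dir1 m k hk D hD P hP, dir2 m k hk D hD P hP⟩
end

section
/- Let $m$ be a positive integer, $k \geq 5$ odd, with least prime factor of $m$ at least $(k+2)/2$, and let $\ell = (k-1)/2$. Suppose $a, a+c, \ldots, a + \ell c$ are elements of $\mathbb{Z}/m\mathbb{Z}$ with $c \neq 0$, all represented in $[0, d]$ for some $d < \frac{(k-1)m}{k+1}$, and suppose indices $1 \leq i' < i \leq \ell+1$ satisfy $0 < (a + (i-1)c) - (a + (i'-1)c) < \frac{m}{\ell+1}$ as integers in $[0, m-1]$. If additionally $a + \ell c = d$ (as integer representative), then the representative of $a + (\ell + i - i')c$ lies in $\{d+1, \ldots, m-1\}$. -/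
/-- Final contradiction step of the odd-`k` proof: a small positive gap between
two early terms pushes the term `ℓ + i - i'` of the progression into
`{d+1, …, m-1}`, outside the digit interval `[0,d]`. -/
theorem stmt19 (m k ℓ d : ℕ) (hm : 0 < m) (hk : 5 ≤ k) (hkodd : Odd k)
    (hℓ : ℓ = (k - 1) / 2) (hpf : (k + 2) / 2 ≤ m.minFac)
    (hd : d * (k + 1) < (k - 1) * m)
    (a c : ZMod m) (hc : c ≠ 0)
    (hin : ∀ i : ℕ, i ≤ ℓ → (a + i • c).val ≤ d)
    (i i' : ℕ) (h1 : 1 ≤ i') (hii : i' < i) (hi : i ≤ ℓ + 1)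
    (hpos : (a + (i' - 1) • c).val < (a + (i - 1) • c).val)
    (hgap : ((a + (i - 1) • c).val - (a + (i' - 1) • c).val) * (ℓ + 1) < m)
    (hmid : (a + ℓ • c).val = d) :
    d + 1 ≤ (a + (ℓ + i - i') • c).val ∧ (a + (ℓ + i - i') • c).val ≤ m - 1 := by
  haveI : NeZero m := ⟨hm.ne'⟩
  obtain ⟨t, ht⟩ := hkodd
  have hkl : k = 2 * ℓ + 1 := by omega
  set x := a + (i' - 1) • c with hx
  set y := a + (i - 1) • c with hy
  set g := y.val - x.val with hg
  have hyx : y = x + (i - i') • c := by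
    have h : i - 1 = (i' - 1) + (i - i') := by omega
    rw [hy, h, add_nsmul, ← add_assoc]
  have hvg : ((i - i') • c).val = g := by
    have : (i - i') • c = y - x := by rw [hyx]; ring
    rw [this, ZMod.val_sub hpos.le]
  have hsplit : a + (ℓ + i - i') • c = (a + ℓ • c) + (i - i') • c := by
    have h : ℓ + i - i' = ℓ + (i - i') := by omega
    rw [h, add_nsmul, ← add_assoc]
  have hdg : d + g < m := by
    have h1 : d * (2 * ℓ + 2) < 2 * ℓ * m := by
      have e2 : (2 * ℓ + 1) + 1 = 2 * ℓ + 2 := by ring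
      have e3 : (2 * ℓ + 1) - 1 = 2 * ℓ := by omega
      rw [hkl, e2, e3] at hd; exact hd
    have h2 : g * (ℓ + 1) < m := hgap
    nlinarith
  have hval : (a + (ℓ + i - i') • c).val = d + g := by
    rw [hsplit, ZMod.val_add, hmid, hvg, Nat.mod_eq_of_lt hdg]
  constructor
  · omega
  · omega
end
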